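/- arXiv:1911.06894 — 6 statements merged into one kernel-verified Lean document; each statement's English description precedes it below -/
import Mathlib

section
/- Let A¹x¹ + b¹y ≤ d¹ and A²x² + b²y ≤ d² be two systems of linear inequalities with integer data, each of which implies 0 ≤ y ≤ 1 and each of which defines an integral polyhedron. Then the combined system (both sets of inequalities, sharing the single variable y) also defines an integral polyhedron. -/
/-!
If `p = (x₁, x₂, y)` lies in the combined polyhedron but not in the closed convex hull of its
integer points, some functional `f = ψ₁ x₁ + ψ₂ x₂ + γ y` satisfies `f < δ` on integer points and
`δ < f p`. Integer points lie at heights `0` and `1`. Choosing upper bounds `aₜ` of `ψ₁` and `bₜ` of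
`ψ₂` on the integer points at height `t` of the two systems with `aₜ + bₜ + t γ ≤ δ`, integrality of
each system gives `ψ₁ x₁ ≤ (1 - y) a₀ + y a₁` and `ψ₂ x₂ ≤ (1 - y) b₀ + y b₁`, hence `f p ≤ δ`.
Such bounds exist once each `ψᵢ` is bounded above at both heights. It is bounded at a height where
both systems have integer points, hence at every height: were `ψ` unbounded at another height,
Dickson's lemma would give integer points `u, u'` there with `A u' ≤ A u` and `ψ (u' - u)`
arbitrarily large, and `u' - u` is an integral recession direction of the system.
-/

/-- An element of `(Fin n → ℝ) × ℝ` is integral if all its coordinates are integers. -/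
def IntPt1 {n : ℕ} (p : (Fin n → ℝ) × ℝ) : Prop :=
  (∀ i, ∃ k : ℤ, p.1 i = (k : ℝ)) ∧ ∃ k : ℤ, p.2 = (k : ℝ)

/-- An element of `(Fin n₁ → ℝ) × (Fin n₂ → ℝ) × ℝ` is integral if all its coordinates
are integers. -/
def IntPt2 {n₁ n₂ : ℕ} (p : (Fin n₁ → ℝ) × (Fin n₂ → ℝ) × ℝ) : Prop :=
  (∀ i, ∃ k : ℤ, p.1 i = (k : ℝ)) ∧ (∀ i, ∃ k : ℤ, p.2.1 i = (k : ℝ)) ∧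
    ∃ k : ℤ, p.2.2 = (k : ℝ)

open scoped Matrix

theorem exists_forall_exists_ge_le_of_le {ι : Type*} [Finite ι] (v : ℕ → ι → ℤ) (D : ι → ℤ)
    (hv : ∀ k, v k ≤ D) : ∃ k, ∀ N, ∃ l ≥ N, v l ≤ v k := by
  obtain ⟨g, hg⟩ := (wellQuasiOrdered_le (α := ι → ℕ)).exists_monotone_subseq
    fun k i => (D i - v k i).toNat
  refine ⟨g 0, fun N => ⟨g N, g.strictMono.id_le N, fun i => ?_⟩⟩
  show v (g N) i ≤ v (g 0) i
  have h0 : v (g 0) i ≤ D i := hv (g 0) i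
  have hN : v (g N) i ≤ D i := hv (g N) i
  have : (D i - v (g 0) i).toNat ≤ (D i - v (g N) i).toNat := hg 0 N N.zero_le i
  omega

theorem bddAbove_image_setOf_mulVec_le {ι κ : Type*} [Fintype ι] [Fintype κ]
    (A : Matrix ι κ ℤ) (φ : (κ → ℤ) →+ ℝ) {e e' : ι → ℤ}
    (hne : {z | A *ᵥ z ≤ e}.Nonempty) (hbdd : BddAbove (φ '' {z | A *ᵥ z ≤ e})) :
    BddAbove (φ '' {z | A *ᵥ z ≤ e'}) := by
  obtain ⟨z₀, hz₀⟩ := hne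
  obtain ⟨B, hB⟩ := hbdd
  by_contra hunb
  have hlarge (k : ℕ) : ∃ z, A *ᵥ z ≤ e' ∧ (k : ℝ) < φ z := by
    obtain ⟨_, ⟨z, hz, rfl⟩, hkz⟩ := not_bddAbove_iff.1 hunb k
    exact ⟨z, hz, hkz⟩
  choose u hu hφu using hlarge
  obtain ⟨k, hk⟩ := exists_forall_exists_ge_le_of_le (fun k => A *ᵥ u k) e' hu
  obtain ⟨l, hl, hle⟩ := hk ⌈B - φ z₀ + φ (u k)⌉₊
  -- `u l - u k` is a recession direction of `{z | A *ᵥ z ≤ e}` along which `φ` is large.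
  have hmem : A *ᵥ (z₀ + (u l - u k)) ≤ e := fun i => by
    simp only [Matrix.mulVec_add, Matrix.mulVec_sub, Pi.add_apply, Pi.sub_apply]
    linarith [hz₀ i, hle i]
  have hB' : φ z₀ + (φ (u l) - φ (u k)) ≤ B := by
    simpa only [map_add, map_sub] using hB ⟨_, hmem, rfl⟩
  have hl' : B - φ z₀ + φ (u k) ≤ l := (Nat.le_ceil _).trans (by exact_mod_cast hl)
  linarith [hφu l]

theorem exists_add_le_of_forall_add_le {U V : Set ℝ} {c : ℝ} (hU : BddAbove U) (hV : BddAbove V)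
    (h : ∀ u ∈ U, ∀ v ∈ V, u + v ≤ c) :
    ∃ a b, a + b ≤ c ∧ a ∈ upperBounds U ∧ b ∈ upperBounds V := by
  rcases U.eq_empty_or_nonempty with rfl | hUne
  · obtain ⟨b, hb⟩ := hV
    exact ⟨c - b, b, by linarith, by simp, hb⟩
  · refine ⟨sSup U, c - sSup U, by linarith, fun u hu => le_csSup hU hu, fun v hv => ?_⟩
    have : sSup U ≤ c - v := csSup_le hUne fun u hu => by linarith [h u hu v hv]
    linarith

def intSlice {n : ℕ} (P : Set ((Fin n → ℝ) × ℝ)) (t : ℝ) : Set (Fin n → ℝ) :=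
  {u | (u, t) ∈ P ∧ IntPt1 (u, t)}

section IntegralSlab

variable {n : ℕ} {P : Set ((Fin n → ℝ) × ℝ)}

theorem snd_eq_zero_or_one_of_intPt1 (hy : ∀ p ∈ P, 0 ≤ p.2 ∧ p.2 ≤ 1)
    {p : (Fin n → ℝ) × ℝ} (hp : p ∈ P) (hpI : IntPt1 p) : p.2 = 0 ∨ p.2 = 1 := by
  obtain ⟨k, hk⟩ := hpI.2
  obtain ⟨h0, h1⟩ := hy p hp
  rw [hk] at h0 h1 ⊢
  have : k = 0 ∨ k = 1 := by
    have : (0 : ℤ) ≤ k := by exact_mod_cast h0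
    have : k ≤ 1 := by exact_mod_cast h1
    omega
  rcases this with rfl | rfl <;> simp

theorem le_of_forall_intSlice_le (hy : ∀ p ∈ P, 0 ≤ p.2 ∧ p.2 ≤ 1)
    (hint : P = closure (convexHull ℝ {p ∈ P | IntPt1 p}))
    (ψ : (Fin n → ℝ) →L[ℝ] ℝ) {c₀ c₁ : ℝ}
    (h₀ : ∀ u ∈ intSlice P 0, ψ u ≤ c₀) (h₁ : ∀ u ∈ intSlice P 1, ψ u ≤ c₁)
    {p : (Fin n → ℝ) × ℝ} (hp : p ∈ P) :
    ψ p.1 ≤ (1 - p.2) * c₀ + p.2 * c₁ := by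
  let g : (Fin n → ℝ) × ℝ →L[ℝ] ℝ :=
    ψ.comp (.fst ℝ _ _) + (c₀ - c₁) • .snd ℝ _ _
  have hg : ∀ q, g q = ψ q.1 + (c₀ - c₁) * q.2 := fun q => rfl
  have hS : {p ∈ P | IntPt1 p} ⊆ g ⁻¹' Set.Iic c₀ := by
    rintro ⟨u, t⟩ ⟨hu, huI⟩
    simp only [Set.mem_preimage, Set.mem_Iic, hg]
    rcases snd_eq_zero_or_one_of_intPt1 hy hu huI with rfl | rfl
    · linarith [h₀ u ⟨hu, huI⟩]
    · linarith [h₁ u ⟨hu, huI⟩]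
  have hP : P ⊆ g ⁻¹' Set.Iic c₀ := hint ▸ closure_minimal
    (convexHull_min hS ((convex_Iic c₀).linear_preimage g.toLinearMap))
    (isClosed_Iic.preimage g.continuous)
  have : g p ≤ c₀ := hP hp
  linarith [hg p]

theorem intSlice_zero_nonempty (hy : ∀ p ∈ P, 0 ≤ p.2 ∧ p.2 ≤ 1)
    (hint : P = closure (convexHull ℝ {p ∈ P | IntPt1 p}))
    {p : (Fin n → ℝ) × ℝ} (hp : p ∈ P) (hp1 : p.2 < 1) : (intSlice P 0).Nonempty := by
  by_contra h
  -- for `ψ = 0` the bound reads `0 ≤ p.2 - 1`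
  have := le_of_forall_intSlice_le hy hint 0 (c₀ := -1) (c₁ := 0)
    (fun u hu => (h ⟨u, hu⟩).elim) (fun _ _ => le_rfl) hp
  simp only [zero_apply] at this
  linarith

theorem intSlice_one_nonempty (hy : ∀ p ∈ P, 0 ≤ p.2 ∧ p.2 ≤ 1)
    (hint : P = closure (convexHull ℝ {p ∈ P | IntPt1 p}))
    {p : (Fin n → ℝ) × ℝ} (hp : p ∈ P) (hp0 : 0 < p.2) : (intSlice P 1).Nonempty := by
  by_contra h
  have := le_of_forall_intSlice_le hy hint 0 (c₀ := 0) (c₁ := -1)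
    (fun _ _ => le_rfl) (fun u hu => (h ⟨u, hu⟩).elim) hp
  simp only [zero_apply] at this
  linarith

end IntegralSlab

section Polyhedron

variable {n m : ℕ} {A : Matrix (Fin m) (Fin n) ℤ} {b d : Fin m → ℤ} {P : Set ((Fin n → ℝ) × ℝ)}

theorem intSlice_intCast
    (hP : P = {p | ∀ j, (∑ i, (A j i : ℝ) * p.1 i) + (b j : ℝ) * p.2 ≤ (d j : ℝ)}) (k : ℤ) :
    intSlice P k = (fun z i => (z i : ℝ)) '' {z | A *ᵥ z ≤ d - k • b} := by
  have hmem (z : Fin n → ℤ) : ((fun i => (z i : ℝ)), (k : ℝ)) ∈ P ↔ A *ᵥ z ≤ d - k • b := by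
    subst hP
    refine forall_congr' fun j => ?_
    rw [← @Int.cast_le ℝ]
    push_cast [Matrix.mulVec, dotProduct, Pi.sub_apply, Pi.smul_apply, smul_eq_mul]
    constructor <;> intro <;> linarith
  ext u
  constructor
  · rintro ⟨hu, hI, -⟩
    choose z hz using hI
    obtain rfl : u = fun i => (z i : ℝ) := funext hz
    exact ⟨z, (hmem z).1 hu, rfl⟩
  · rintro ⟨z, hz, rfl⟩
    exact ⟨(hmem z).2 hz, fun i => ⟨z i, rfl⟩, k, rfl⟩

theorem bddAbove_image_intSlice
    (hP : P = {p | ∀ j, (∑ i, (A j i : ℝ) * p.1 i) + (b j : ℝ) * p.2 ≤ (d j : ℝ)})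
    {F : Type*} [FunLike F (Fin n → ℝ) ℝ] [AddMonoidHomClass F (Fin n → ℝ) ℝ] (ψ : F)
    {s t : ℝ} (hne : (intSlice P s).Nonempty) (hbdd : BddAbove (ψ '' intSlice P s)) :
    BddAbove (ψ '' intSlice P t) := by
  let φ : (Fin n → ℤ) →+ ℝ := (ψ : (Fin n → ℝ) →+ ℝ).comp ((Int.castAddHom ℝ).compLeft (Fin n))
  have himage (k : ℤ) : ψ '' intSlice P k = φ '' {z | A *ᵥ z ≤ d - k • b} := by
    rw [intSlice_intCast hP, Set.image_image]; rfl
  obtain ⟨-, -, -, k, rfl⟩ := id hne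
  rcases (intSlice P t).eq_empty_or_nonempty with ht | ⟨u, -, -, l, rfl⟩
  · simp [ht]
  rw [himage] at hbdd ⊢
  rw [intSlice_intCast hP, Set.image_nonempty] at hne
  exact bddAbove_image_setOf_mulVec_le A φ hne hbdd

end Polyhedron

theorem add_add_mul_le_of_intSlice {n₁ n₂ m₁ m₂ : ℕ}
    {A₁ : Matrix (Fin m₁) (Fin n₁) ℤ} {b₁ d₁ : Fin m₁ → ℤ}
    {A₂ : Matrix (Fin m₂) (Fin n₂) ℤ} {b₂ d₂ : Fin m₂ → ℤ}
    {P₁ : Set ((Fin n₁ → ℝ) × ℝ)} {P₂ : Set ((Fin n₂ → ℝ) × ℝ)}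
    (hP₁ : P₁ = {p | ∀ j, (∑ i, (A₁ j i : ℝ) * p.1 i) + (b₁ j : ℝ) * p.2 ≤ (d₁ j : ℝ)})
    (hP₂ : P₂ = {p | ∀ j, (∑ i, (A₂ j i : ℝ) * p.1 i) + (b₂ j : ℝ) * p.2 ≤ (d₂ j : ℝ)})
    (hy₁ : ∀ p ∈ P₁, 0 ≤ p.2 ∧ p.2 ≤ 1) (hy₂ : ∀ p ∈ P₂, 0 ≤ p.2 ∧ p.2 ≤ 1)
    (hint₁ : P₁ = closure (convexHull ℝ {p ∈ P₁ | IntPt1 p}))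
    (hint₂ : P₂ = closure (convexHull ℝ {p ∈ P₂ | IntPt1 p}))
    (ψ₁ : (Fin n₁ → ℝ) →L[ℝ] ℝ) (ψ₂ : (Fin n₂ → ℝ) →L[ℝ] ℝ) {γ δ : ℝ}
    (h : ∀ t, ∀ u ∈ intSlice P₁ t, ∀ v ∈ intSlice P₂ t, ψ₁ u + ψ₂ v + t * γ ≤ δ)
    {x₁ : Fin n₁ → ℝ} {x₂ : Fin n₂ → ℝ} {y : ℝ} (hx₁ : (x₁, y) ∈ P₁) (hx₂ : (x₂, y) ∈ P₂) :
    ψ₁ x₁ + ψ₂ x₂ + y * γ ≤ δ := by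
  obtain ⟨hy0, hy1⟩ := hy₁ _ hx₁
  obtain ⟨s, ⟨u₀, hu₀⟩, ⟨v₀, hv₀⟩⟩ :
      ∃ s, (intSlice P₁ s).Nonempty ∧ (intSlice P₂ s).Nonempty := by
    rcases hy1.lt_or_eq with hlt | rfl
    · exact ⟨0, intSlice_zero_nonempty hy₁ hint₁ hx₁ hlt,
        intSlice_zero_nonempty hy₂ hint₂ hx₂ hlt⟩
    · exact ⟨1, intSlice_one_nonempty hy₁ hint₁ hx₁ one_pos,
        intSlice_one_nonempty hy₂ hint₂ hx₂ one_pos⟩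
  have hbdd₁ (t : ℝ) : BddAbove (ψ₁ '' intSlice P₁ t) := by
    refine bddAbove_image_intSlice hP₁ ψ₁ ⟨u₀, hu₀⟩ ⟨δ - s * γ - ψ₂ v₀, ?_⟩
    rintro _ ⟨u, hu, rfl⟩
    linarith [h s u hu v₀ hv₀]
  have hbdd₂ (t : ℝ) : BddAbove (ψ₂ '' intSlice P₂ t) := by
    refine bddAbove_image_intSlice hP₂ ψ₂ ⟨v₀, hv₀⟩ ⟨δ - s * γ - ψ₁ u₀, ?_⟩
    rintro _ ⟨v, hv, rfl⟩
    linarith [h s u₀ hu₀ v hv]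
  have hbounds (t : ℝ) : ∃ a b, a + b + t * γ ≤ δ ∧
      a ∈ upperBounds (ψ₁ '' intSlice P₁ t) ∧ b ∈ upperBounds (ψ₂ '' intSlice P₂ t) := by
    obtain ⟨a, b, hab, ha, hb⟩ :=
      exists_add_le_of_forall_add_le (hbdd₁ t) (hbdd₂ t) (c := δ - t * γ) <| by
        rintro _ ⟨u, hu, rfl⟩ _ ⟨v, hv, rfl⟩
        linarith [h t u hu v hv]
    exact ⟨a, b, by linarith, ha, hb⟩
  obtain ⟨α₀, β₀, hαβ₀, hα₀, hβ₀⟩ := hbounds 0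
  obtain ⟨α₁, β₁, hαβ₁, hα₁, hβ₁⟩ := hbounds 1
  have h₁ := le_of_forall_intSlice_le hy₁ hint₁ ψ₁
    (fun u hu => hα₀ ⟨u, hu, rfl⟩) (fun u hu => hα₁ ⟨u, hu, rfl⟩) hx₁
  have h₂ := le_of_forall_intSlice_le hy₂ hint₂ ψ₂
    (fun v hv => hβ₀ ⟨v, hv, rfl⟩) (fun v hv => hβ₁ ⟨v, hv, rfl⟩) hx₂
  nlinarith [mul_le_mul_of_nonneg_left hαβ₀ (sub_nonneg.2 hy1),
    mul_le_mul_of_nonneg_left hαβ₁ hy0]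

theorem isClosed_and_convex_fiberProd {E₁ E₂ F : Type*}
    [AddCommGroup E₁] [Module ℝ E₁] [TopologicalSpace E₁]
    [AddCommGroup E₂] [Module ℝ E₂] [TopologicalSpace E₂]
    [AddCommGroup F] [Module ℝ F] [TopologicalSpace F]
    {P₁ : Set (E₁ × F)} {P₂ : Set (E₂ × F)} (hc₁ : IsClosed P₁) (hv₁ : Convex ℝ P₁)
    (hc₂ : IsClosed P₂) (hv₂ : Convex ℝ P₂) :
    IsClosed {p : E₁ × E₂ × F | (p.1, p.2.2) ∈ P₁ ∧ (p.2.1, p.2.2) ∈ P₂} ∧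
      Convex ℝ {p : E₁ × E₂ × F | (p.1, p.2.2) ∈ P₁ ∧ (p.2.1, p.2.2) ∈ P₂} :=
  ⟨(hc₁.preimage (by fun_prop)).inter (hc₂.preimage (by fun_prop)),
    (hv₁.is_linear_preimage ⟨fun _ _ => rfl, fun _ _ => rfl⟩).inter
      (hv₂.is_linear_preimage ⟨fun _ _ => rfl, fun _ _ => rfl⟩)⟩

/-- Two inequality systems `Aᵢxᵢ + bᵢ y ≤ dᵢ` with integer data, each implying
`0 ≤ y ≤ 1` and each defining an integral polyhedron (i.e. the polyhedron is the
closed convex hull of its integer points), combine --- sharing the single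
variable `y` --- into a system that again defines an integral polyhedron. -/
theorem stmt2 (n₁ n₂ m₁ m₂ : ℕ)
    (A₁ : Matrix (Fin m₁) (Fin n₁) ℤ) (b₁ d₁ : Fin m₁ → ℤ)
    (A₂ : Matrix (Fin m₂) (Fin n₂) ℤ) (b₂ d₂ : Fin m₂ → ℤ)
    (P₁ : Set ((Fin n₁ → ℝ) × ℝ)) (P₂ : Set ((Fin n₂ → ℝ) × ℝ))
    (hP₁ : P₁ = {p | ∀ j, (∑ i, (A₁ j i : ℝ) * p.1 i) + (b₁ j : ℝ) * p.2 ≤ (d₁ j : ℝ)})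
    (hP₂ : P₂ = {p | ∀ j, (∑ i, (A₂ j i : ℝ) * p.1 i) + (b₂ j : ℝ) * p.2 ≤ (d₂ j : ℝ)})
    (hy₁ : ∀ p ∈ P₁, 0 ≤ p.2 ∧ p.2 ≤ 1)
    (hy₂ : ∀ p ∈ P₂, 0 ≤ p.2 ∧ p.2 ≤ 1)
    (hint₁ : P₁ = closure (convexHull ℝ {p ∈ P₁ | IntPt1 p}))
    (hint₂ : P₂ = closure (convexHull ℝ {p ∈ P₂ | IntPt1 p}))
    (P : Set ((Fin n₁ → ℝ) × (Fin n₂ → ℝ) × ℝ))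
    (hP : P = {p | (p.1, p.2.2) ∈ P₁ ∧ (p.2.1, p.2.2) ∈ P₂}) :
    P = closure (convexHull ℝ {p ∈ P | IntPt2 p}) := by
  have hcc : IsClosed P ∧ Convex ℝ P := hP ▸ isClosed_and_convex_fiberProd
    (hint₁ ▸ isClosed_closure) (hint₁ ▸ (convex_convexHull ℝ _).closure)
    (hint₂ ▸ isClosed_closure) (hint₂ ▸ (convex_convexHull ℝ _).closure)
  refine subset_antisymm (fun p hp => ?_)
    (closure_minimal (convexHull_min (fun q hq => hq.1) hcc.2) hcc.1)
  by_contra hpS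
  obtain ⟨f, δ, hfS, hδp⟩ :=
    geometric_hahn_banach_closed_point (convex_convexHull ℝ _).closure isClosed_closure hpS
  let ψ₁ := f.comp (.inl ℝ _ _)
  let ψ₂ := f.comp ((ContinuousLinearMap.inr ℝ _ _).comp (.inl ℝ _ _))
  have hf (q : (Fin n₁ → ℝ) × (Fin n₂ → ℝ) × ℝ) :
      f q = ψ₁ q.1 + ψ₂ q.2.1 + q.2.2 * f (0, 0, 1) := by
    rw [← f.comp_inl_add_comp_inr q, ← (f.comp (.inr ℝ _ _)).comp_inl_add_comp_inr q.2,
      ← smul_eq_mul, ← map_smul, add_assoc]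
    simp [ψ₁, ψ₂]
  have hfp : f p ≤ δ := by
    rw [hP] at hp
    rw [hf]
    refine add_add_mul_le_of_intSlice hP₁ hP₂ hy₁ hy₂ hint₁ hint₂ ψ₁ ψ₂ ?_ hp.1 hp.2
    rintro t u ⟨hu, huI⟩ v ⟨hv, hvI⟩
    have hS : (u, v, t) ∈ {q ∈ P | IntPt2 q} := ⟨hP ▸ ⟨hu, hv⟩, huI.1, hvI.1, huI.2⟩
    exact (hf _ ▸ hfS _ (subset_closure (subset_convexHull ℝ _ hS))).le
  linarith
end

section
/- Let P₁ ⊆ ℝ^{S₁} and P₂ ⊆ ℝ^{S₂} be integral polytopes whose coordinate index sets satisfy S₁ ∩ S₂ = {y} for a single shared coordinate y, and such that both P₁ and P₂ are contained in [0,1] in the y-coordinate and every vertex of P₁ and of P₂ has y-coordinate in {0,1}. Then the 'glued' polytope P = { z ∈ ℝ^{S₁ ∪ S₂} : z|_{S₁} ∈ P₁, z|_{S₂} ∈ P₂ } is an integral polytope. -/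
set_option maxHeartbeats 1000000
lemma split_lemma {E : Type*} [AddCommGroup E] [Module ℝ E] (f : E →ₗ[ℝ] ℝ) (V : Set E)
    (hVy : ∀ v ∈ V, f v = 0 ∨ f v = 1) {z : E}
    (hz : z ∈ convexHull ℝ V) (ht0 : 0 < f z) (ht1 : f z < 1) :
    ∃ a b, a ∈ convexHull ℝ V ∧ b ∈ convexHull ℝ V ∧ f a = 1 ∧ f b = 0 ∧
      z = f z • a + (1 - f z) • b := by
  classical
  rw [convexHull_eq] at hz
  obtain ⟨κ, t, w, v, hw0, hw1, hvV, hcm⟩ := hz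
  rw [Finset.centerMass_eq_of_sum_1 _ _ hw1] at hcm
  set A : Finset κ := t.filter (fun i => f (v i) = 1) with hA
  have hAt : A ⊆ t := Finset.filter_subset _ _
  have hBt : t \ A ⊆ t := Finset.sdiff_subset
  have hfz : f z = ∑ i ∈ A, w i := by
    rw [← hcm, map_sum]
    rw [← Finset.sum_filter_add_sum_filter_not t (fun i => f (v i) = 1)]
    have h1 : ∑ i ∈ A, f (w i • v i) = ∑ i ∈ A, w i := by
      apply Finset.sum_congr rfl
      intro i hi
      rw [map_smul, (Finset.mem_filter.1 hi).2, smul_eq_mul, mul_one]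
    have h2 : ∑ i ∈ t.filter (fun i => ¬ f (v i) = 1), f (w i • v i) = 0 := by
      apply Finset.sum_eq_zero
      intro i hi
      obtain ⟨hit, hne⟩ := Finset.mem_filter.1 hi
      have := (hVy (v i) (hvV i hit)).resolve_right hne
      rw [map_smul, this, smul_eq_mul, mul_zero]
    rw [hA, h1, h2, add_zero]
  have hsd : t \ A = t.filter (fun i => ¬ f (v i) = 1) := by
    rw [Finset.sdiff_eq_filter, hA]
    ext i
    simp [Finset.mem_filter, and_comm]
    tauto
  have hAsum : 0 < ∑ i ∈ A, w i := hfz ▸ ht0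
  have hBsum : 0 < ∑ i ∈ t \ A, w i := by
    have : ∑ i ∈ A, w i + ∑ i ∈ t \ A, w i = 1 := by
      rw [Finset.sum_sdiff_eq_sub hAt] at *
      ring_nf
      linarith [hw1]
    linarith [hfz ▸ ht1]
  refine ⟨A.centerMass w v, (t \ A).centerMass w v,
    A.centerMass_mem_convexHull (fun i hi => hw0 i (hAt hi)) hAsum (fun i hi => hvV i (hAt hi)),
    (t \ A).centerMass_mem_convexHull (fun i hi => hw0 i (hBt hi)) hBsum (fun i hi => hvV i (hBt hi)),
    ?_, ?_, ?_⟩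
  · rw [Finset.centerMass, map_smul, map_sum, smul_eq_mul]
    have : ∑ i ∈ A, f (w i • v i) = ∑ i ∈ A, w i := by
      apply Finset.sum_congr rfl
      intro i hi
      rw [map_smul, (Finset.mem_filter.1 hi).2, smul_eq_mul, mul_one]
    rw [this, inv_mul_cancel₀ (ne_of_gt hAsum)]
  · rw [Finset.centerMass, map_smul, map_sum, smul_eq_mul]
    have : ∑ i ∈ t \ A, f (w i • v i) = 0 := by
      apply Finset.sum_eq_zero
      intro i hi
      rw [hsd] at hi
      obtain ⟨hit, hne⟩ := Finset.mem_filter.1 hi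
      have := (hVy (v i) (hvV i hit)).resolve_right hne
      rw [map_smul, this, smul_eq_mul, mul_zero]
    rw [this, mul_zero]
  · have h1a : (1 : ℝ) - f z = ∑ i ∈ t \ A, w i := by
      rw [hfz, Finset.sum_sdiff_eq_sub hAt, hw1]
    have h1a' : (1 : ℝ) - ∑ i ∈ A, w i = ∑ i ∈ t \ A, w i := hfz ▸ h1a
    rw [Finset.centerMass, Finset.centerMass, hfz, h1a',
      smul_inv_smul₀ (ne_of_gt hAsum), smul_inv_smul₀ (ne_of_gt hBsum)]
    rw [← hcm, ← Finset.sum_sdiff hAt, add_comm]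



/-- Gluing two integral polytopes along a single shared coordinate `y`, on which
both polytopes are contained in `[0,1]` and all vertices take value `0` or `1`,
yields an integral polytope: every extreme point of the glued polytope is
integral. Here the polytopes are given as convex hulls of their (finite,
integral) vertex sets. -/
theorem stmt3 {ι : Type} (S₁ S₂ : Set ι) (y : ι)
    (hy₁ : y ∈ S₁) (hy₂ : y ∈ S₂) (hS : S₁ ∩ S₂ = {y})
    (P₁ : Set (S₁ → ℝ)) (P₂ : Set (S₂ → ℝ))
    (V₁ : Set (S₁ → ℝ)) (V₂ : Set (S₂ → ℝ))
    (hV₁fin : V₁.Finite) (hV₂fin : V₂.Finite)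
    (hV₁int : ∀ v ∈ V₁, ∀ i, ∃ k : ℤ, v i = (k : ℝ))
    (hV₂int : ∀ v ∈ V₂, ∀ i, ∃ k : ℤ, v i = (k : ℝ))
    (hV₁y : ∀ v ∈ V₁, v ⟨y, hy₁⟩ = 0 ∨ v ⟨y, hy₁⟩ = 1)
    (hV₂y : ∀ v ∈ V₂, v ⟨y, hy₂⟩ = 0 ∨ v ⟨y, hy₂⟩ = 1)
    (hP₁ : P₁ = convexHull ℝ V₁) (hP₂ : P₂ = convexHull ℝ V₂)
    (hbox₁ : ∀ p ∈ P₁, 0 ≤ p ⟨y, hy₁⟩ ∧ p ⟨y, hy₁⟩ ≤ 1)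
    (hbox₂ : ∀ p ∈ P₂, 0 ≤ p ⟨y, hy₂⟩ ∧ p ⟨y, hy₂⟩ ≤ 1)
    (P : Set ((↥(S₁ ∪ S₂)) → ℝ))
    (hP : P = {z | (fun i : S₁ => z ⟨i.1, Set.mem_union_left _ i.2⟩) ∈ P₁ ∧
                   (fun i : S₂ => z ⟨i.1, Set.mem_union_right _ i.2⟩) ∈ P₂}) :
    ∀ p ∈ P.extremePoints ℝ, ∀ i, ∃ k : ℤ, p i = (k : ℝ) := by
  classical
  intro p hp
  obtain ⟨hpP, hext⟩ := (mem_extremePoints).1 hp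
  have hpP' := hpP
  rw [hP] at hpP'
  obtain ⟨hp1, hp2⟩ := hpP'
  set w₀ : ↥(S₁ ∪ S₂) := ⟨y, Set.mem_union_left _ hy₁⟩ with hw0n
  have hw0n' : (⟨y, Set.mem_union_right _ hy₂⟩ : ↥(S₁ ∪ S₂)) = w₀ := rfl
  set w₁ : ↥S₁ := ⟨y, hy₁⟩ with hw₁
  set w₂ : ↥S₂ := ⟨y, hy₂⟩ with hw₂
  -- the gluing map
  set g : (↥S₁ → ℝ) → (↥S₂ → ℝ) → (↥(S₁ ∪ S₂) → ℝ) :=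
    fun a b i => if h : i.1 ∈ S₁ then a ⟨i.1, h⟩ else b ⟨i.1, i.2.resolve_left h⟩ with hg
  have hunique : ∀ (i : ↥(S₁ ∪ S₂)), i.1 ∈ S₁ → i.1 ∈ S₂ → i.1 = y := by
    intro i h1 h2
    have : i.1 ∈ S₁ ∩ S₂ := ⟨h1, h2⟩
    rwa [hS] at this
  have hgr₁ : ∀ a b, (fun i : S₁ => g a b ⟨i.1, Set.mem_union_left _ i.2⟩) = a := by
    intro a b; funext i
    show g a b ⟨i.1, Set.mem_union_left _ i.2⟩ = a i
    rw [hg]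
    simp only []
    rw [dif_pos i.2]
  have hgr₂ : ∀ a b, a w₁ = b w₂ →
      (fun i : S₂ => g a b ⟨i.1, Set.mem_union_right _ i.2⟩) = b := by
    intro a b hab; funext i
    show g a b ⟨i.1, Set.mem_union_right _ i.2⟩ = b i
    rw [hg]
    simp only []
    by_cases h : i.1 ∈ S₁
    · rw [dif_pos h]
      have hiy : i.1 = y := hunique ⟨i.1, Set.mem_union_right _ i.2⟩ h i.2
      have h1 : (⟨i.1, h⟩ : ↥S₁) = w₁ := Subtype.ext hiy
      have h2 : i = w₂ := Subtype.ext hiy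
      rw [h1, h2, hab]
    · rw [dif_neg h]
  have hgmem : ∀ a ∈ P₁, ∀ b ∈ P₂, a w₁ = b w₂ → g a b ∈ P := by
    intro a ha b hb hab
    rw [hP]
    exact ⟨(hgr₁ a b).symm ▸ ha, (hgr₂ a b hab).symm ▸ hb⟩
  have hgy : ∀ a b, g a b w₀ = a w₁ := by
    intro a b
    rw [hg]; simp only []
    rw [dif_pos hy₁]
  -- evaluation facts
  have hpy1 : (fun i : S₁ => p ⟨i.1, Set.mem_union_left _ i.2⟩) w₁ = p w₀ := rfl
  have hpy2 : (fun i : S₂ => p ⟨i.1, Set.mem_union_right _ i.2⟩) w₂ = p w₀ := rfl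
  have hbox : 0 ≤ p w₀ ∧ p w₀ ≤ 1 := hbox₁ _ hp1
  -- Step 1: p w₀ ∈ {0, 1}
  have hty : p w₀ = 0 ∨ p w₀ = 1 := by
    by_contra hcon
    push_neg at hcon
    have ht0 : 0 < p w₀ := lt_of_le_of_ne hbox.1 (Ne.symm hcon.1)
    have ht1 : p w₀ < 1 := lt_of_le_of_ne hbox.2 hcon.2
    have hf1 : (LinearMap.proj w₁ : (↥S₁ → ℝ) →ₗ[ℝ] ℝ)
        (fun i : S₁ => p ⟨i.1, Set.mem_union_left _ i.2⟩) = p w₀ := rfl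
    have hf2 : (LinearMap.proj w₂ : (↥S₂ → ℝ) →ₗ[ℝ] ℝ)
        (fun i : S₂ => p ⟨i.1, Set.mem_union_right _ i.2⟩) = p w₀ := rfl
    obtain ⟨a₁, b₁, ha₁, hb₁, ha₁y, hb₁y, heq₁⟩ :=
      split_lemma (LinearMap.proj w₁) V₁ (by simpa using hV₁y) (hP₁ ▸ hp1)
        (hf1 ▸ ht0) (hf1 ▸ ht1)
    obtain ⟨a₂, b₂, ha₂, hb₂, ha₂y, hb₂y, heq₂⟩ :=
      split_lemma (LinearMap.proj w₂) V₂ (by simpa using hV₂y) (hP₂ ▸ hp2)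
        (hf2 ▸ ht0) (hf2 ▸ ht1)
    rw [hf1] at heq₁
    rw [hf2] at heq₂
    simp only [LinearMap.proj_apply, Function.eval] at ha₁y hb₁y ha₂y hb₂y
    have hqP : g a₁ a₂ ∈ P := hgmem a₁ (hP₁ ▸ ha₁) a₂ (hP₂ ▸ ha₂) (by rw [ha₁y, ha₂y])
    have hrP : g b₁ b₂ ∈ P := hgmem b₁ (hP₁ ▸ hb₁) b₂ (hP₂ ▸ hb₂) (by rw [hb₁y, hb₂y])
    have hpeq : p w₀ • g a₁ a₂ + (1 - p w₀) • g b₁ b₂ = p := by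
      funext i
      by_cases h : i.1 ∈ S₁
      · have e1 : g a₁ a₂ i = a₁ ⟨i.1, h⟩ := by rw [hg]; simp only []; rw [dif_pos h]
        have e2 : g b₁ b₂ i = b₁ ⟨i.1, h⟩ := by rw [hg]; simp only []; rw [dif_pos h]
        have := congrFun heq₁ ⟨i.1, h⟩
        simp only [Pi.add_apply, Pi.smul_apply, smul_eq_mul] at this ⊢
        rw [e1, e2, ← this]
      · have h2 : i.1 ∈ S₂ := i.2.resolve_left h
        have e1 : g a₁ a₂ i = a₂ ⟨i.1, h2⟩ := by rw [hg]; simp only []; rw [dif_neg h]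
        have e2 : g b₁ b₂ i = b₂ ⟨i.1, h2⟩ := by rw [hg]; simp only []; rw [dif_neg h]
        have := congrFun heq₂ ⟨i.1, h2⟩
        simp only [Pi.add_apply, Pi.smul_apply, smul_eq_mul] at this ⊢
        rw [e1, e2, ← this]
    obtain ⟨hq, hr⟩ := hext _ hqP _ hrP
      ⟨p w₀, 1 - p w₀, ht0, by linarith, by ring, hpeq⟩
    have : g a₁ a₂ w₀ = g b₁ b₂ w₀ := by rw [hq, hr]
    rw [hgy, hgy, ha₁y, hb₁y] at this
    exact one_ne_zero this
  -- Step 2: the restrictions are extreme points of P₁, P₂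
  have hex1 : (fun i : S₁ => p ⟨i.1, Set.mem_union_left _ i.2⟩) ∈ P₁.extremePoints ℝ := by
    refine (mem_extremePoints).2 ⟨hp1, ?_⟩
    intro x₁ hx₁ x₂ hx₂ hseg
    obtain ⟨c, d, hc, hd, hcd, hsum⟩ := hseg
    have hb1 := hbox₁ _ hx₁
    have hb2 := hbox₁ _ hx₂
    have hsy : c * x₁ w₁ + d * x₂ w₁ = p w₀ := by
      have := congrFun hsum w₁
      simpa [smul_eq_mul] using this
    have hx₁y : x₁ w₁ = p w₀ := by
      rcases hty with h | h <;> rw [h] at hsy <;> nlinarith [hb1.1, hb1.2, hb2.1, hb2.2]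
    have hx₂y : x₂ w₁ = p w₀ := by
      rcases hty with h | h <;> rw [h] at hsy <;> nlinarith [hb1.1, hb1.2, hb2.1, hb2.2]
    have hqP : g x₁ (fun i : S₂ => p ⟨i.1, Set.mem_union_right _ i.2⟩) ∈ P :=
      hgmem _ hx₁ _ hp2 (by rw [hx₁y])
    have hrP : g x₂ (fun i : S₂ => p ⟨i.1, Set.mem_union_right _ i.2⟩) ∈ P :=
      hgmem _ hx₂ _ hp2 (by rw [hx₂y])
    have hpeq : c • g x₁ (fun i : S₂ => p ⟨i.1, Set.mem_union_right _ i.2⟩)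
        + d • g x₂ (fun i : S₂ => p ⟨i.1, Set.mem_union_right _ i.2⟩) = p := by
      funext i
      by_cases h : i.1 ∈ S₁
      · have e1 : g x₁ (fun i : S₂ => p ⟨i.1, Set.mem_union_right _ i.2⟩) i
            = x₁ ⟨i.1, h⟩ := by rw [hg]; simp only []; rw [dif_pos h]
        have e2 : g x₂ (fun i : S₂ => p ⟨i.1, Set.mem_union_right _ i.2⟩) i
            = x₂ ⟨i.1, h⟩ := by rw [hg]; simp only []; rw [dif_pos h]
        have := congrFun hsum ⟨i.1, h⟩
        simp only [Pi.add_apply, Pi.smul_apply, smul_eq_mul] at this ⊢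
        rw [e1, e2, this]
      · have h2 : i.1 ∈ S₂ := i.2.resolve_left h
        have e1 : g x₁ (fun i : S₂ => p ⟨i.1, Set.mem_union_right _ i.2⟩) i
            = p ⟨i.1, Set.mem_union_right _ h2⟩ := by rw [hg]; simp only []; rw [dif_neg h]
        have e2 : g x₂ (fun i : S₂ => p ⟨i.1, Set.mem_union_right _ i.2⟩) i
            = p ⟨i.1, Set.mem_union_right _ h2⟩ := by rw [hg]; simp only []; rw [dif_neg h]
        simp only [Pi.add_apply, Pi.smul_apply, smul_eq_mul]
        rw [e1, e2]
        have : p ⟨i.1, Set.mem_union_right _ h2⟩ = p i := congrArg p (Subtype.ext rfl)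
        rw [this]; linear_combination (p i) * hcd
    obtain ⟨hq, hr⟩ := hext _ hqP _ hrP ⟨c, d, hc, hd, hcd, hpeq⟩
    constructor
    · rw [← hgr₁ x₁ (fun i : S₂ => p ⟨i.1, Set.mem_union_right _ i.2⟩), hq]
    · rw [← hgr₁ x₂ (fun i : S₂ => p ⟨i.1, Set.mem_union_right _ i.2⟩), hr]
  have hex2 : (fun i : S₂ => p ⟨i.1, Set.mem_union_right _ i.2⟩) ∈ P₂.extremePoints ℝ := by
    refine (mem_extremePoints).2 ⟨hp2, ?_⟩
    intro x₁ hx₁ x₂ hx₂ hseg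
    obtain ⟨c, d, hc, hd, hcd, hsum⟩ := hseg
    have hb1 := hbox₂ _ hx₁
    have hb2 := hbox₂ _ hx₂
    have hsy : c * x₁ w₂ + d * x₂ w₂ = p w₀ := by
      have := congrFun hsum w₂
      simpa [smul_eq_mul] using this
    have hx₁y : x₁ w₂ = p w₀ := by
      rcases hty with h | h <;> rw [h] at hsy <;> nlinarith [hb1.1, hb1.2, hb2.1, hb2.2]
    have hx₂y : x₂ w₂ = p w₀ := by
      rcases hty with h | h <;> rw [h] at hsy <;> nlinarith [hb1.1, hb1.2, hb2.1, hb2.2]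
    have hqP : g (fun i : S₁ => p ⟨i.1, Set.mem_union_left _ i.2⟩) x₁ ∈ P :=
      hgmem _ hp1 _ hx₁ (by rw [hx₁y])
    have hrP : g (fun i : S₁ => p ⟨i.1, Set.mem_union_left _ i.2⟩) x₂ ∈ P :=
      hgmem _ hp1 _ hx₂ (by rw [hx₂y])
    have hpeq : c • g (fun i : S₁ => p ⟨i.1, Set.mem_union_left _ i.2⟩) x₁
        + d • g (fun i : S₁ => p ⟨i.1, Set.mem_union_left _ i.2⟩) x₂ = p := by
      funext i
      by_cases h : i.1 ∈ S₁
      · have e1 : g (fun i : S₁ => p ⟨i.1, Set.mem_union_left _ i.2⟩) x₁ i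
            = p ⟨i.1, Set.mem_union_left _ h⟩ := by rw [hg]; simp only []; rw [dif_pos h]
        have e2 : g (fun i : S₁ => p ⟨i.1, Set.mem_union_left _ i.2⟩) x₂ i
            = p ⟨i.1, Set.mem_union_left _ h⟩ := by rw [hg]; simp only []; rw [dif_pos h]
        simp only [Pi.add_apply, Pi.smul_apply, smul_eq_mul]
        rw [e1, e2]
        have : p ⟨i.1, Set.mem_union_left _ h⟩ = p i := congrArg p (Subtype.ext rfl)
        rw [this]; linear_combination (p i) * hcd
      · have h2 : i.1 ∈ S₂ := i.2.resolve_left h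
        have e1 : g (fun i : S₁ => p ⟨i.1, Set.mem_union_left _ i.2⟩) x₁ i
            = x₁ ⟨i.1, h2⟩ := by rw [hg]; simp only []; rw [dif_neg h]
        have e2 : g (fun i : S₁ => p ⟨i.1, Set.mem_union_left _ i.2⟩) x₂ i
            = x₂ ⟨i.1, h2⟩ := by rw [hg]; simp only []; rw [dif_neg h]
        have := congrFun hsum ⟨i.1, h2⟩
        simp only [Pi.add_apply, Pi.smul_apply, smul_eq_mul] at this ⊢
        rw [e1, e2, this]
    obtain ⟨hq, hr⟩ := hext _ hqP _ hrP ⟨c, d, hc, hd, hcd, hpeq⟩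
    constructor
    · rw [← hgr₂ (fun i : S₁ => p ⟨i.1, Set.mem_union_left _ i.2⟩) x₁ (by rw [hx₁y]), hq]
    · rw [← hgr₂ (fun i : S₁ => p ⟨i.1, Set.mem_union_left _ i.2⟩) x₂ (by rw [hx₂y]), hr]
  have hv1 : (fun i : S₁ => p ⟨i.1, Set.mem_union_left _ i.2⟩) ∈ V₁ :=
    extremePoints_convexHull_subset (hP₁ ▸ hex1)
  have hv2 : (fun i : S₂ => p ⟨i.1, Set.mem_union_right _ i.2⟩) ∈ V₂ :=
    extremePoints_convexHull_subset (hP₂ ▸ hex2)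
  intro i
  by_cases h : i.1 ∈ S₁
  · obtain ⟨k, hk⟩ := hV₁int _ hv1 ⟨i.1, h⟩
    exact ⟨k, hk⟩
  · have h2 : i.1 ∈ S₂ := i.2.resolve_left h
    obtain ⟨k, hk⟩ := hV₂int _ hv2 ⟨i.1, h2⟩
    exact ⟨k, hk⟩
end

section
/- Let T be a finite family of subsets of [n] satisfying condition (A'): there exist pairwise distinct i₁, i₂, i₃ ∈ [n] with {{i₁,i₃}, {i₂,i₃}, {i₁,i₂,i₃}} ⊆ { m ∩ {i₁,i₂,i₃} : m ∈ T }. Then T satisfies property (A): there exist m₁, m₂, m₃ ∈ T with m₁ ∩ m₂ ∩ m₃ ≠ ∅ such that m₃ ∩ (m₁ ∪ m₂) is a proper superset of both m₃ ∩ m₁ and m₃ ∩ m₂. -/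
/-- Condition (A') implies property (A). -/
theorem stmt11 (n : ℕ) (T : Finset (Finset (Fin n)))
    (hA' : ∃ i₁ i₂ i₃ : Fin n, i₁ ≠ i₂ ∧ i₁ ≠ i₃ ∧ i₂ ≠ i₃ ∧
        (∃ m ∈ T, m ∩ {i₁, i₂, i₃} = {i₁, i₃}) ∧
        (∃ m ∈ T, m ∩ {i₁, i₂, i₃} = {i₂, i₃}) ∧
        (∃ m ∈ T, m ∩ {i₁, i₂, i₃} = {i₁, i₂, i₃})) :
    ∃ m₁ ∈ T, ∃ m₂ ∈ T, ∃ m₃ ∈ T,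
      (m₁ ∩ m₂ ∩ m₃).Nonempty ∧
      m₃ ∩ m₁ ⊂ m₃ ∩ (m₁ ∪ m₂) ∧ m₃ ∩ m₂ ⊂ m₃ ∩ (m₁ ∪ m₂) := by
  obtain ⟨i₁, i₂, i₃, h12, h13, h23, ⟨m₁, hm₁T, hm₁⟩, ⟨m₂, hm₂T, hm₂⟩, ⟨m₃, hm₃T, hm₃⟩⟩ := hA'
  have mem1 : ∀ x : Fin n, x ∈ ({i₁, i₂, i₃} : Finset (Fin n)) →
      (x ∈ m₁ ↔ x ∈ ({i₁, i₃} : Finset (Fin n))) := by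
    intro x hx
    rw [← hm₁, Finset.mem_inter]
    exact ⟨fun h => ⟨h, hx⟩, fun h => h.1⟩
  have mem2 : ∀ x : Fin n, x ∈ ({i₁, i₂, i₃} : Finset (Fin n)) →
      (x ∈ m₂ ↔ x ∈ ({i₂, i₃} : Finset (Fin n))) := by
    intro x hx
    rw [← hm₂, Finset.mem_inter]
    exact ⟨fun h => ⟨h, hx⟩, fun h => h.1⟩
  have mem3 : ∀ x : Fin n, x ∈ ({i₁, i₂, i₃} : Finset (Fin n)) →
      (x ∈ m₃ ↔ x ∈ ({i₁, i₂, i₃} : Finset (Fin n))) := by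
    intro x hx
    rw [← hm₃, Finset.mem_inter]
    exact ⟨fun h => ⟨h, hx⟩, fun h => h.1⟩
  have hi1 : i₁ ∈ ({i₁, i₂, i₃} : Finset (Fin n)) := by simp
  have hi2 : i₂ ∈ ({i₁, i₂, i₃} : Finset (Fin n)) := by simp
  have hi3 : i₃ ∈ ({i₁, i₂, i₃} : Finset (Fin n)) := by simp
  have h1m1 : i₁ ∈ m₁ := (mem1 i₁ hi1).2 (by simp)
  have h3m1 : i₃ ∈ m₁ := (mem1 i₃ hi3).2 (by simp)
  have h2m1 : i₂ ∉ m₁ := fun h => by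
    have := (mem1 i₂ hi2).1 h
    simp [h12.symm, h23] at this
  have h2m2 : i₂ ∈ m₂ := (mem2 i₂ hi2).2 (by simp)
  have h3m2 : i₃ ∈ m₂ := (mem2 i₃ hi3).2 (by simp)
  have h1m2 : i₁ ∉ m₂ := fun h => by
    have := (mem2 i₁ hi1).1 h
    simp [h12, h13] at this
  have h1m3 : i₁ ∈ m₃ := (mem3 i₁ hi1).2 hi1
  have h2m3 : i₂ ∈ m₃ := (mem3 i₂ hi2).2 hi2
  have h3m3 : i₃ ∈ m₃ := (mem3 i₃ hi3).2 hi3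
  refine ⟨m₁, hm₁T, m₂, hm₂T, m₃, hm₃T, ⟨i₃, by simp [h3m1, h3m2, h3m3]⟩, ?_, ?_⟩
  · constructor
    · intro x hx
      simp only [Finset.mem_inter, Finset.mem_union] at *
      exact ⟨hx.1, Or.inl hx.2⟩
    · intro hsub
      have := hsub (by simp [h2m3, h2m2] : i₂ ∈ m₃ ∩ (m₁ ∪ m₂))
      simp [h2m1] at this
  · constructor
    · intro x hx
      simp only [Finset.mem_inter, Finset.mem_union] at *
      exact ⟨hx.1, Or.inr hx.2⟩
    · intro hsub
      have := hsub (by simp [h1m3, h1m1] : i₁ ∈ m₃ ∩ (m₁ ∪ m₂))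
      simp [h1m2] at this
end

section
/- Let T be a finite family of subsets of [n] satisfying property (A): there exist m₁, m₂, m₃ ∈ T with m₁ ∩ m₂ ∩ m₃ ≠ ∅ such that m₃ ∩ (m₁ ∪ m₂) is a proper superset of both m₃ ∩ m₁ and m₃ ∩ m₂. Then T satisfies condition (A'): there exist pairwise distinct i₁, i₂, i₃ ∈ [n] with {{i₁,i₃}, {i₂,i₃}, {i₁,i₂,i₃}} ⊆ { m ∩ {i₁,i₂,i₃} : m ∈ T }. -/
/-- Property (A) implies condition (A'). -/
theorem stmt12 (n : ℕ) (T : Finset (Finset (Fin n)))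
    (hA : ∃ m₁ ∈ T, ∃ m₂ ∈ T, ∃ m₃ ∈ T,
        (m₁ ∩ m₂ ∩ m₃).Nonempty ∧
        m₃ ∩ m₁ ⊂ m₃ ∩ (m₁ ∪ m₂) ∧ m₃ ∩ m₂ ⊂ m₃ ∩ (m₁ ∪ m₂)) :
    ∃ i₁ i₂ i₃ : Fin n, i₁ ≠ i₂ ∧ i₁ ≠ i₃ ∧ i₂ ≠ i₃ ∧
      (∃ m ∈ T, m ∩ {i₁, i₂, i₃} = {i₁, i₃}) ∧
      (∃ m ∈ T, m ∩ {i₁, i₂, i₃} = {i₂, i₃}) ∧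
      (∃ m ∈ T, m ∩ {i₁, i₂, i₃} = {i₁, i₂, i₃}) := by
  obtain ⟨m₁, hm₁, m₂, hm₂, m₃, hm₃, ⟨i₃, hi₃⟩, h1, h2⟩ := hA
  simp only [Finset.mem_inter] at hi₃
  obtain ⟨⟨hi₃1, hi₃2⟩, hi₃3⟩ := hi₃
  obtain ⟨i₂, hi₂mem, hi₂not⟩ := Finset.exists_of_ssubset h1
  obtain ⟨i₁, hi₁mem, hi₁not⟩ := Finset.exists_of_ssubset h2
  simp only [Finset.mem_inter, Finset.mem_union, not_and] at hi₂mem hi₂not hi₁mem hi₁not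
  have hi₁3 : i₁ ∈ m₃ := hi₁mem.1
  have hi₂3 : i₂ ∈ m₃ := hi₂mem.1
  have hi₁not2 : i₁ ∉ m₂ := fun h => hi₁not hi₁3 h
  have hi₂not1 : i₂ ∉ m₁ := fun h => hi₂not hi₂3 h
  have hi₁1 : i₁ ∈ m₁ := by
    rcases hi₁mem.2 with h | h
    · exact h
    · exact absurd h hi₁not2
  have hi₂2 : i₂ ∈ m₂ := by
    rcases hi₂mem.2 with h | h
    · exact absurd h hi₂not1
    · exact h
  have ne12 : i₁ ≠ i₂ := fun h => hi₂not1 (h ▸ hi₁1)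
  have ne13 : i₁ ≠ i₃ := fun h => hi₁not2 (h ▸ hi₃2)
  have ne23 : i₂ ≠ i₃ := fun h => hi₂not1 (h ▸ hi₃1)
  refine ⟨i₁, i₂, i₃, ne12, ne13, ne23, ⟨m₁, hm₁, ?_⟩, ⟨m₂, hm₂, ?_⟩, ⟨m₃, hm₃, ?_⟩⟩ <;>
  · ext x
    simp only [Finset.mem_inter, Finset.mem_insert, Finset.mem_singleton]
    constructor
    · rintro ⟨hx, rfl | rfl | rfl⟩ <;> tauto
    · rintro (rfl | rfl | rfl) <;> tauto
end

section
/- Let m₁ and m₂ be finite sets with m₁ ∩ m₂ ≠ ∅ but |m₁ ∩ m₂| ≥ 2, and let D be a finite directed acyclic graph modeling a simple consistent linearization containing m₁ and m₂ as nodes. Suppose m₁ ∩ m₂ is not a common successor of m₁ and m₂ in D (i.e., there is no node equal to m₁ ∩ m₂ reachable from both). If additionally every element of m₁ ∩ m₂ is reachable as a singleton from both m₁ and m₂, then the underlying undirected graph of D contains a cycle. -/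
/-!
Suppose the underlying graph were a forest. Joining `m₁` and `m₂` through a singleton `{i}`
below both gives a walk whose vertices are each below `m₁` or below `m₂`; its reduction to a path
keeps this property, and since along it the predecessor of the first vertex not below `m₁` must
be below both, some vertex `y` of the path is a common successor. Every vertex is a subset of its
ancestors, so `y ⊆ m₁ ∩ m₂`. Conversely, in a forest that path is the unique one, so it lies on the
walk through `{j}` for every `j ∈ m₁ ∩ m₂`; hence `y` reaches `{j}` and `m₁ ∩ m₂ ⊆ y`.
-/

open Relation SimpleGraph

variable {V : Type*} {r : V → V → Prop}

theorem SimpleGraph.IsAcyclic.support_subset_of_walk [DecidableEq V] {G : SimpleGraph V}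
    (hG : G.IsAcyclic) {u v : V} (p : G.Path u v) (w : G.Walk u v) : p.1.support ⊆ w.support :=
  (hG.subsingleton_path u v).elim w.toPath p ▸ w.support_toPath_subset_support

theorem Relation.ReflTransGen.le_of_forall_le {α : Type*} [Preorder α] {r : α → α → Prop}
    (hr : ∀ a b, r a b → b ≤ a) {a b : α} (h : ReflTransGen r a b) : b ≤ a := by
  induction h with
  | refl => exact le_rfl
  | tail _ hbc ih => exact (hr _ _ hbc).trans ih

theorem exists_walk_of_reflTransGen {a b : V} (h : ReflTransGen r a b) :
    ∃ w : (fromRel r).Walk a b, ∀ x ∈ w.support, ReflTransGen r a x ∧ ReflTransGen r x b := by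
  induction h with
  | refl => exact ⟨.nil, by simp [ReflTransGen.refl]⟩
  | @tail b c hab hbc ih =>
    obtain ⟨w, hw⟩ := ih
    by_cases hbc' : b = c
    · subst hbc'
      exact ⟨w, hw⟩
    refine ⟨w.concat ((fromRel_adj r b c).mpr ⟨hbc', Or.inl hbc⟩), fun x hx => ?_⟩
    rw [Walk.support_concat, List.mem_append, List.mem_singleton] at hx
    rcases hx with hx | rfl
    · exact ⟨(hw x hx).1, (hw x hx).2.tail hbc⟩
    · exact ⟨hab.tail hbc, .refl⟩

theorem exists_walk_of_reflTransGen_of_reflTransGen {a b x : V}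
    (ha : ReflTransGen r a x) (hb : ReflTransGen r b x) :
    ∃ w : (fromRel r).Walk a b,
      ∀ y ∈ w.support, (ReflTransGen r a y ∨ ReflTransGen r b y) ∧ ReflTransGen r y x := by
  obtain ⟨wa, hwa⟩ := exists_walk_of_reflTransGen ha
  obtain ⟨wb, hwb⟩ := exists_walk_of_reflTransGen hb
  refine ⟨wa.append wb.reverse, fun y hy => ?_⟩
  rw [Walk.mem_support_append_iff, Walk.support_reverse, List.mem_reverse] at hy
  rcases hy with hy | hy
  · exact ⟨.inl (hwa y hy).1, (hwa y hy).2⟩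
  · exact ⟨.inr (hwb y hy).1, (hwb y hy).2⟩

/-- The first edge of the walk leaving `A` cannot point forward along `r`, so it points back from
a vertex of `B`, which puts its source in `B` as well. -/
theorem exists_mem_support_and_of_forall_mem_support_or (A B : V → Prop)
    (hA : ∀ x y, A x → r x y → A y) (hB : ∀ x y, B x → r x y → B y) {u v : V}
    (w : (fromRel r).Walk u v) (hu : A u) (hv : B v) (hAB : ∀ x ∈ w.support, A x ∨ B x) :
    ∃ y ∈ w.support, A y ∧ B y := by
  induction w with
  | nil => exact ⟨_, by simp, hu, hv⟩
  | @cons a b c h w ih =>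
    by_cases hb : A b
    · obtain ⟨y, hy, hAy, hBy⟩ := ih hb hv fun x hx => hAB x (by simp [hx])
      exact ⟨y, by simp [hy], hAy, hBy⟩
    have hBb : B b := (hAB b (by simp)).resolve_left hb
    rcases ((fromRel_adj r a b).mp h).2 with hab | hba
    · exact absurd (hA a b hu hab) hb
    · exact ⟨a, by simp, hu, hB b a hBb hba⟩

theorem reflTransGen_inter_of_isAcyclic {α : Type*} [DecidableEq α]
    {r : Finset α → Finset α → Prop}
    (hr : ∀ a b, r a b → b ⊆ a) (hG : (fromRel r).IsAcyclic) {m₁ m₂ : Finset α}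
    (hne : (m₁ ∩ m₂).Nonempty)
    (hreach : ∀ i ∈ m₁ ∩ m₂, ReflTransGen r m₁ {i} ∧ ReflTransGen r m₂ {i}) :
    ReflTransGen r m₁ (m₁ ∩ m₂) ∧ ReflTransGen r m₂ (m₁ ∩ m₂) := by
  obtain ⟨i, hi⟩ := hne
  obtain ⟨w, hw⟩ := exists_walk_of_reflTransGen_of_reflTransGen (hreach i hi).1 (hreach i hi).2
  obtain ⟨y, hy, hy₁, hy₂⟩ := exists_mem_support_and_of_forall_mem_support_or
    (ReflTransGen r m₁) (ReflTransGen r m₂) (fun _ _ h => h.tail) (fun _ _ h => h.tail)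
    w.toPath.1 .refl .refl fun x hx => (hw x (w.support_toPath_subset_support hx)).1
  have hy_sub : y ⊆ m₁ ∩ m₂ :=
    Finset.subset_inter (hy₁.le_of_forall_le hr) (hy₂.le_of_forall_le hr)
  have sub_hy : m₁ ∩ m₂ ⊆ y := fun j hj => by
    obtain ⟨wj, hwj⟩ :=
      exists_walk_of_reflTransGen_of_reflTransGen (hreach j hj).1 (hreach j hj).2
    exact Finset.singleton_subset_iff.mp
      ((hwj y (hG.support_subset_of_walk w.toPath wj hy)).2.le_of_forall_le hr)
  rw [← hy_sub.antisymm sub_hy]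
  exact ⟨hy₁, hy₂⟩

theorem stmt17_general (n : ℕ)
    (C : Finset (Finset (Finset (Fin n))))
    (m₁ m₂ : Finset (Fin n))
    (hcard : 2 ≤ (m₁ ∩ m₂).card)
    (hnotsucc : ¬ (Relation.ReflTransGen
        (fun a b => ∃ c ∈ C, a = c.sup id ∧ b ∈ c) m₁ (m₁ ∩ m₂) ∧
      Relation.ReflTransGen
        (fun a b => ∃ c ∈ C, a = c.sup id ∧ b ∈ c) m₂ (m₁ ∩ m₂)))
    (hreach : ∀ i ∈ m₁ ∩ m₂,
      Relation.ReflTransGen (fun a b => ∃ c ∈ C, a = c.sup id ∧ b ∈ c) m₁ {i} ∧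
      Relation.ReflTransGen (fun a b => ∃ c ∈ C, a = c.sup id ∧ b ∈ c) m₂ {i}) :
    ¬ (SimpleGraph.fromRel
        (fun a b => ∃ c ∈ C, a = c.sup id ∧ b ∈ c)).IsAcyclic := by
  have hr : ∀ a b, (∃ c ∈ C, a = c.sup id ∧ b ∈ c) → b ⊆ a := by
    rintro _ b ⟨c, -, rfl, hb⟩
    exact Finset.le_sup (f := id) hb
  exact fun hG => hnotsucc <| reflTransGen_inter_of_isAcyclic hr hG
    (Finset.card_pos.mp (zero_lt_two.trans_le hcard)) hreach

/-- If in a simple consistent linearization digraph two monomials `m₁, m₂ ∈ M`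
have `|m₁ ∩ m₂| ≥ 2`, the intersection `m₁ ∩ m₂` is not a common successor of
`m₁` and `m₂`, and every element of `m₁ ∩ m₂` is reachable as a singleton from
both `m₁` and `m₂`, then the underlying undirected graph of the digraph
contains a cycle. -/
theorem stmt17 (n : ℕ) (M : Finset (Finset (Fin n)))
    (C : Finset (Finset (Finset (Fin n))))
    (hsing : ∀ i : Fin n, {i} ∈ M)
    (hC : ∀ c ∈ C, (∀ m' ∈ c, m' ∈ M) ∧ c.sup id ∈ M)
    (hcons : ∀ m ∈ M, 2 ≤ m.card →
      ∃ c ∈ C, c.sup id = m ∧ ∀ m' ∈ c, m' ⊂ m ∧ m'.card < m.card)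
    (hsimple : ∀ c₁ ∈ C, ∀ c₂ ∈ C, c₁.sup id = c₂.sup id → c₁ = c₂)
    (m₁ m₂ : Finset (Fin n)) (hm₁ : m₁ ∈ M) (hm₂ : m₂ ∈ M)
    (hcard : 2 ≤ (m₁ ∩ m₂).card)
    (hnotsucc : ¬ (Relation.ReflTransGen
        (fun a b => ∃ c ∈ C, a = c.sup id ∧ b ∈ c) m₁ (m₁ ∩ m₂) ∧
      Relation.ReflTransGen
        (fun a b => ∃ c ∈ C, a = c.sup id ∧ b ∈ c) m₂ (m₁ ∩ m₂)))
    (hreach : ∀ i ∈ m₁ ∩ m₂,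
      Relation.ReflTransGen (fun a b => ∃ c ∈ C, a = c.sup id ∧ b ∈ c) m₁ {i} ∧
      Relation.ReflTransGen (fun a b => ∃ c ∈ C, a = c.sup id ∧ b ∈ c) m₂ {i}) :
    ¬ (SimpleGraph.fromRel
        (fun a b => ∃ c ∈ C, a = c.sup id ∧ b ∈ c)).IsAcyclic :=
  stmt17_general n C m₁ m₂ hcard hnotsucc hreach
end

section
/- Consider n = 3 and the polytope P ⊆ ℝ^6 in variables y_{{1}}, y_{{2}}, y_{{3}}, y_{{1,2}}, y_{{2,3}}, y_{{1,2,3}} defined by the AND-linearization inequalities for the constraints {1,2} = {1}∧{2}, {2,3} = {2}∧{3}, and {1,2,3} = {1,2}∧{2,3} (i.e., for each constraint c with resultant r: y_r ≤ y_m for m ∈ c and Σ_{m∈c} y_m ≤ y_r + |c| − 1, together with 0 ≤ y ≤ 1). Then the inequality y_{{1,2}} + y_{{3}} ≤ y_{{1,2,3}} + 1 is valid for all integer points of P but is violated by some (fractional) point of P. -/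
/-- For `n = 3` and target monomials `{1,2}`, `{2,3}`, `{1,2,3}` (here indexed
`{0,1}`, `{1,2}`, `{0,1,2}` over `Fin 3`) linearized via the AND-constraints
`{0,1} = {0} ∧ {1}`, `{1,2} = {1} ∧ {2}`, `{0,1,2} = {0,1} ∧ {1,2}`, the
inequality `y_{{0,1}} + y_{{2}} ≤ y_{{0,1,2}} + 1` is valid for all integer
points of the relaxation polytope `P` but violated by some fractional point
of `P`. -/
theorem stmt19 (P : Set (Finset (Fin 3) → ℝ))
    (hP : P = {y |
      (0 ≤ y {0} ∧ y {0} ≤ 1) ∧ (0 ≤ y {1} ∧ y {1} ≤ 1) ∧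
      (0 ≤ y {2} ∧ y {2} ≤ 1) ∧ (0 ≤ y {0, 1} ∧ y {0, 1} ≤ 1) ∧
      (0 ≤ y {1, 2} ∧ y {1, 2} ≤ 1) ∧ (0 ≤ y {0, 1, 2} ∧ y {0, 1, 2} ≤ 1) ∧
      (y {0, 1} ≤ y {0} ∧ y {0, 1} ≤ y {1} ∧ y {0} + y {1} ≤ y {0, 1} + 1) ∧
      (y {1, 2} ≤ y {1} ∧ y {1, 2} ≤ y {2} ∧ y {1} + y {2} ≤ y {1, 2} + 1) ∧
      (y {0, 1, 2} ≤ y {0, 1} ∧ y {0, 1, 2} ≤ y {1, 2} ∧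
        y {0, 1} + y {1, 2} ≤ y {0, 1, 2} + 1)}) :
    (∀ y ∈ P, (∀ m : Finset (Fin 3), ∃ z : ℤ, y m = (z : ℝ)) →
      y {0, 1} + y {2} ≤ y {0, 1, 2} + 1) ∧
    ∃ y ∈ P, y {0, 1, 2} + 1 < y {0, 1} + y {2} := by
  subst hP
  constructor
  · rintro y ⟨h0, h1, h2, h01, h12, h012, c1, c2, c3⟩ hint
    obtain ⟨a, ha⟩ := hint {0, 1}
    obtain ⟨b, hb⟩ := hint {2}
    have haz : a = 0 ∨ a = 1 := by
      have l : (0 : ℤ) ≤ a := by exact_mod_cast ha ▸ h01.1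
      have u : a ≤ (1 : ℤ) := by exact_mod_cast ha ▸ h01.2
      omega
    have hbz : b = 0 ∨ b = 1 := by
      have l : (0 : ℤ) ≤ b := by exact_mod_cast hb ▸ h2.1
      have u : b ≤ (1 : ℤ) := by exact_mod_cast hb ▸ h2.2
      omega
    rcases haz with rfl | rfl <;> rcases hbz with rfl | rfl <;>
      simp only [Int.cast_zero, Int.cast_one] at ha hb <;>
      obtain ⟨c1a, c1b, c1c⟩ := c1 <;> obtain ⟨c2a, c2b, c2c⟩ := c2 <;>
      obtain ⟨c3a, c3b, c3c⟩ := c3 <;> linarith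
  · refine ⟨fun m => 1 - (if (1 : Fin 3) ∈ m then 1/2 else 0)
      - (if (0 : Fin 3) ∈ m ∧ (2 : Fin 3) ∈ m then 1/2 else 0), ?_, ?_⟩ <;>
      norm_num [Finset.mem_insert, Finset.mem_singleton, Fin.ext_iff]
end
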